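/- Given a homotopy h for d with d h d = d, and a degree -2 endomorphism b satisfying π b = 0, h b = 0, b h = 0, b π = 0 where π = 1 - d h - h d, the operator h' = (1 + d b d) h (1 - d b d) is again a homotopy for d with d h' d = d and with 1 - d h' - h' d = π. -/
import Mathlib


/-- transformation B of the ABC lemma: given a homotopy `h` for
`d` with `d h d = d`, and an endomorphism `b` with `π b = 0`, `h b = 0`,
`b h = 0`, `b π = 0` (where `π = 1 - d h - h d`), the operator
`h' = (1 + d b d) h (1 - d b d)` is again a homotopy for `d` with
`d h' d = d` and `1 - d h' - h' d = π`. -/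
theorem stmt_5 {R : Type*} [CommRing R] {M : Type*} [AddCommGroup M] [Module R M]
    (d h b : Module.End R M)
    (hd2 : d * d = 0) (hh2 : h * h = 0) (hhdh : h * d * h = h) (hdhd : d * h * d = d)
    (hb1 : (1 - d * h - h * d) * b = 0)
    (hb2 : h * b = 0) (hb3 : b * h = 0)
    (hb4 : b * (1 - d * h - h * d) = 0) :
    ((1 + d * b * d) * h * (1 - d * b * d)) * ((1 + d * b * d) * h * (1 - d * b * d)) = 0 ∧
    ((1 + d * b * d) * h * (1 - d * b * d)) * d * ((1 + d * b * d) * h * (1 - d * b * d))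
      = (1 + d * b * d) * h * (1 - d * b * d) ∧
    d * ((1 + d * b * d) * h * (1 - d * b * d)) * d = d ∧
    1 - d * ((1 + d * b * d) * h * (1 - d * b * d))
      - ((1 + d * b * d) * h * (1 - d * b * d)) * d
      = 1 - d * h - h * d := by
  -- basic derived relations, in right-associated form
  have hdb : h * (d * b) = b := by
    have := hb1
    have e : (1 - d * h - h * d) * b = b - d * (h * b) - h * (d * b) := by noncomm_ring
    rw [e, hb2] at this
    linear_combination (norm := noncomm_ring) -this
  have bdh : b * (d * h) = b := by
    have := hb4
    have e : b * (1 - d * h - h * d) = b - b * (d * h) - b * h * d := by noncomm_ring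
    rw [e, hb3] at this
    linear_combination (norm := noncomm_ring) -this
  have L1 : ∀ x : Module.End R M, d * (d * x) = 0 := by
    intro x; rw [← mul_assoc, hd2, zero_mul]
  have L2 : ∀ x : Module.End R M, h * (h * x) = 0 := by
    intro x; rw [← mul_assoc, hh2, zero_mul]
  have L3 : ∀ x : Module.End R M, h * (d * (h * x)) = h * x := by
    intro x; rw [← mul_assoc, ← mul_assoc, hhdh]
  have L4 : ∀ x : Module.End R M, d * (h * (d * x)) = d * x := by
    intro x; rw [← mul_assoc, ← mul_assoc, hdhd]
  have L5 : ∀ x : Module.End R M, h * (b * x) = 0 := by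
    intro x; rw [← mul_assoc, hb2, zero_mul]
  have L6 : ∀ x : Module.End R M, b * (h * x) = 0 := by
    intro x; rw [← mul_assoc, hb3, zero_mul]
  have L7 : ∀ x : Module.End R M, h * (d * (b * x)) = b * x := by
    intro x; rw [← mul_assoc, ← mul_assoc, mul_assoc h d b, hdb]
  have L8 : ∀ x : Module.End R M, b * (d * (h * x)) = b * x := by
    intro x; rw [← mul_assoc, ← mul_assoc, mul_assoc b d h, bdh]
  have bb : b * b = 0 := by
    have e : b * (d * (h * b)) = b * b := by
      rw [← mul_assoc, ← mul_assoc, mul_assoc b d h, bdh]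
    rw [← e, hb2]; simp
  have L9 : ∀ x : Module.End R M, b * (b * x) = 0 := by
    intro x; rw [← mul_assoc, bb, zero_mul]
  refine ⟨?_, ?_, ?_, ?_⟩ <;>
  · simp only [mul_add, add_mul, mul_sub, sub_mul, mul_one, one_mul, mul_assoc,
      L1, L2, L3, L4, L5, L6, L7, L8, L9, bb, hd2, hh2, hhdh, hdhd, hb2, hb3, hdb, bdh,
      mul_zero, zero_mul, add_zero, zero_add, sub_zero, zero_sub]
    try noncomm_ring
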